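/- Let k be a field, d ≥ 2, and 1 ≤ m ≤ d − 1. Let W = W_{d−m,m} ⊆ M_d(k) be the subspace of d×d matrices whose nonzero entries lie only in the first d − m rows and the last m columns. Then: (i) M·N = 0 for all M, N ∈ W; (ii) the set Ŵ = {λ·I_d + N : λ ∈ k, N ∈ W} is a commutative unital subalgebra of M_d(k) of dimension m·(d − m) + 1; (iii) Ŵ is m-spanning; (iv) Ŵ is not l-spanning for any 1 ≤ l < m. -/

import Mathlib

/-- The subspace `W_{a,b}` of `d × d` matrices whose nonzero entries lie only in the first
`a` rows (0-indexed: `i < a`) and the last `b` columns (0-indexed: `j ≥ d - b`). -/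
def Wab (k : Type*) [Field k] (d a b : ℕ) : Set (Matrix (Fin d) (Fin d) k) :=
  {M | ∀ i j : Fin d, (a ≤ (i : ℕ) ∨ (j : ℕ) < d - b) → M i j = 0}

/-- A set `A` of `d × d` matrices over `k` is `r`-spanning if there exists a subspace
`U ⊆ k^d` with `dim U ≤ r` such that `k^d` is spanned by `{M ⬝ u : M ∈ A, u ∈ U}`. -/
def IsRSpanningMat (k : Type*) [Field k] (d : ℕ) (A : Set (Matrix (Fin d) (Fin d) k))
    (r : ℕ) : Prop :=
  ∃ U : Submodule k (Fin d → k), Module.finrank k U ≤ r ∧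
    Submodule.span k {w : Fin d → k | ∃ M ∈ A, ∃ u ∈ U, w = M.mulVec u} = ⊤

section aux
variable {k : Type*} [Field k] {d m : ℕ}

def blockMap (k : Type*) [Field k] (d m : ℕ) :
    Matrix (Fin (d - m)) (Fin m) k →ₗ[k] Matrix (Fin d) (Fin d) k where
  toFun A := Matrix.of fun i j =>
    if h2 : (i : ℕ) < d - m ∧ d - m ≤ (j : ℕ) ∧ (j : ℕ) - (d - m) < m then
      A ⟨i, h2.1⟩ ⟨(j : ℕ) - (d - m), h2.2.2⟩ else 0
  map_add' A B := by
    funext i j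
    dsimp only [Matrix.of_apply, Matrix.add_apply]
    split <;> simp
  map_smul' c A := by
    funext i j
    dsimp only [Matrix.of_apply, Matrix.smul_apply, RingHom.id_apply]
    split <;> simp

lemma blockMap_apply (A : Matrix (Fin (d - m)) (Fin m) k) (i j : Fin d) :
    blockMap k d m A i j =
      if h2 : (i : ℕ) < d - m ∧ d - m ≤ (j : ℕ) ∧ (j : ℕ) - (d - m) < m then
        A ⟨i, h2.1⟩ ⟨(j : ℕ) - (d - m), h2.2.2⟩ else 0 := rfl

lemma blockMap_inj (hm : m ≤ d) : Function.Injective (blockMap k d m) := by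
  intro A B h
  funext i j
  have hi : ((i : ℕ) : ℕ) < d := by omega
  have hj : d - m + (j : ℕ) < d := by omega
  have := congrFun (congrFun h ⟨(i : ℕ), hi⟩) ⟨d - m + (j : ℕ), hj⟩
  simp only [blockMap_apply] at this
  have hc : ((i : ℕ) : ℕ) < d - m ∧ d - m ≤ d - m + (j : ℕ) ∧ d - m + (j : ℕ) - (d - m) < m := by
    refine ⟨i.isLt, by omega, by omega⟩
  rw [dif_pos hc, dif_pos hc] at this
  convert this using 2 <;> exact (Fin.ext (by simp)).symm

lemma mem_Wab_iff_mem_range (hm : m ≤ d) (M : Matrix (Fin d) (Fin d) k) :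
    M ∈ Wab k d (d - m) m ↔ M ∈ LinearMap.range (blockMap k d m) := by
  constructor
  · intro hM
    refine ⟨Matrix.of fun i j => M (Fin.castLE (by omega) i) ⟨d - m + (j : ℕ), by omega⟩, ?_⟩
    funext i j
    simp only [blockMap_apply, Matrix.of_apply]
    by_cases h : (i : ℕ) < d - m ∧ d - m ≤ (j : ℕ) ∧ (j : ℕ) - (d - m) < m
    · rw [dif_pos h]
      congr 1 <;> exact Fin.ext (by simp [Fin.castLE]; omega)
    · rw [dif_neg h]
      have : d - m ≤ (i : ℕ) ∨ (j : ℕ) < d - m := by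
        have := j.isLt; omega
      exact (hM i j this).symm
  · rintro ⟨A, rfl⟩ i j hij
    simp only [blockMap_apply]
    rw [dif_neg]
    rintro ⟨h1, h2, h3⟩
    rcases hij with h | h <;> omega

lemma single_sum (v : Fin d → k) :
    v = ∑ i : Fin d, v i • (Pi.single i (1 : k) : Fin d → k) := by
  funext j
  simp [Finset.sum_apply, Pi.single_apply, Finset.sum_ite_eq]

lemma mem_span_singles {P : Fin d → Prop} (v : Fin d → k) (hv : ∀ i, ¬ P i → v i = 0) :
    v ∈ Submodule.span k {w : Fin d → k | ∃ i, P i ∧ w = Pi.single i 1} := by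
  rw [single_sum v]
  refine Submodule.sum_mem _ fun i _ => ?_
  by_cases h : P i
  · exact Submodule.smul_mem _ _ (Submodule.subset_span ⟨i, h, rfl⟩)
  · rw [hv i h, zero_smul]; exact Submodule.zero_mem _

lemma stdBasis_mulVec (i j : Fin d) :
    (Matrix.single i j (1 : k)).mulVec (Pi.single j 1) = Pi.single i 1 := by
  funext i'
  simp [Matrix.mulVec, dotProduct, Matrix.single, Pi.single_apply,
    Finset.sum_ite_eq, eq_comm]

lemma finrank_span_singles_le (P : Fin d → Prop) [DecidablePred P] (c : ℕ)
    (hc : (Finset.univ.filter P).card ≤ c) :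
    Module.finrank k (Submodule.span k {w : Fin d → k | ∃ i, P i ∧ w = Pi.single i 1}) ≤ c := by
  have hset : {w : Fin d → k | ∃ i, P i ∧ w = Pi.single i 1}
      = Set.range (fun i : {i : Fin d // P i} => (Pi.single i.1 1 : Fin d → k)) := by
    ext w
    constructor
    · rintro ⟨i, hi, rfl⟩; exact ⟨⟨i, hi⟩, rfl⟩
    · rintro ⟨⟨i, hi⟩, rfl⟩; exact ⟨i, hi, rfl⟩
  rw [hset]
  refine le_trans (finrank_range_le_card _) ?_
  rw [Fintype.card_subtype]
  exact hc

end aux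

theorem Wab_properties {k : Type*} [Field k] (d m : ℕ) (hd : 2 ≤ d)
    (hm1 : 1 ≤ m) (hm2 : m ≤ d - 1) :
    -- (i) W_{d-m,m} is square-zero
    (∀ M ∈ Wab k d (d - m) m, ∀ N ∈ Wab k d (d - m) m, M * N = 0) ∧
    -- (ii) Ŵ = {λ·I + N : N ∈ W} is a commutative unital subalgebra of dim m(d-m)+1
    ((1 : Matrix (Fin d) (Fin d) k) ∈
        {M | ∃ (c : k) (N : Matrix (Fin d) (Fin d) k),
          N ∈ Wab k d (d - m) m ∧ M = c • (1 : Matrix (Fin d) (Fin d) k) + N} ∧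
      (∀ M ∈ {M | ∃ (c : k) (N : Matrix (Fin d) (Fin d) k),
            N ∈ Wab k d (d - m) m ∧ M = c • (1 : Matrix (Fin d) (Fin d) k) + N},
        ∀ N ∈ {M | ∃ (c : k) (N : Matrix (Fin d) (Fin d) k),
            N ∈ Wab k d (d - m) m ∧ M = c • (1 : Matrix (Fin d) (Fin d) k) + N},
        M + N ∈ {M | ∃ (c : k) (N : Matrix (Fin d) (Fin d) k),
            N ∈ Wab k d (d - m) m ∧ M = c • (1 : Matrix (Fin d) (Fin d) k) + N} ∧
        M * N ∈ {M | ∃ (c : k) (N : Matrix (Fin d) (Fin d) k),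
            N ∈ Wab k d (d - m) m ∧ M = c • (1 : Matrix (Fin d) (Fin d) k) + N} ∧
        M * N = N * M) ∧
      (∀ (c : k), ∀ M ∈ {M | ∃ (c : k) (N : Matrix (Fin d) (Fin d) k),
            N ∈ Wab k d (d - m) m ∧ M = c • (1 : Matrix (Fin d) (Fin d) k) + N},
        c • M ∈ {M | ∃ (c : k) (N : Matrix (Fin d) (Fin d) k),
            N ∈ Wab k d (d - m) m ∧ M = c • (1 : Matrix (Fin d) (Fin d) k) + N}) ∧
      Module.finrank k (Submodule.span k
        {M : Matrix (Fin d) (Fin d) k | ∃ (c : k) (N : Matrix (Fin d) (Fin d) k),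
          N ∈ Wab k d (d - m) m ∧ M = c • (1 : Matrix (Fin d) (Fin d) k) + N}) =
        m * (d - m) + 1) ∧
    -- (iii) Ŵ is m-spanning
    IsRSpanningMat k d
      {M | ∃ (c : k) (N : Matrix (Fin d) (Fin d) k),
        N ∈ Wab k d (d - m) m ∧ M = c • (1 : Matrix (Fin d) (Fin d) k) + N} m ∧
    -- (iv) Ŵ is not l-spanning for 1 ≤ l < m
    (∀ l : ℕ, 1 ≤ l → l < m →
      ¬ IsRSpanningMat k d
        {M | ∃ (c : k) (N : Matrix (Fin d) (Fin d) k),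
          N ∈ Wab k d (d - m) m ∧ M = c • (1 : Matrix (Fin d) (Fin d) k) + N} l) := by
  have hmd : m ≤ d := by omega
  -- (i)
  have hsq : ∀ M ∈ Wab k d (d - m) m, ∀ N ∈ Wab k d (d - m) m, M * N = 0 := by
    intro M hM N hN
    funext i j
    rw [Matrix.mul_apply]
    refine Finset.sum_eq_zero fun l _ => ?_
    by_cases h : d - m ≤ (l : ℕ)
    · rw [hN l j (Or.inl h), mul_zero]
    · rw [hM i l (Or.inr (by omega)), zero_mul]
  have hW0 : (0 : Matrix (Fin d) (Fin d) k) ∈ Wab k d (d - m) m := fun i j _ => rfl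
  have hone : (1 : Matrix (Fin d) (Fin d) k) ∈
      {M | ∃ (c : k) (N : Matrix (Fin d) (Fin d) k),
        N ∈ Wab k d (d - m) m ∧ M = c • (1 : Matrix (Fin d) (Fin d) k) + N} :=
    ⟨1, 0, hW0, by simp⟩
  have hWadd : ∀ M ∈ Wab k d (d - m) m, ∀ N ∈ Wab k d (d - m) m,
      M + N ∈ Wab k d (d - m) m := by
    intro M hM N hN i j h
    simp [Matrix.add_apply, hM i j h, hN i j h]
  have hWsmul : ∀ (c : k), ∀ M ∈ Wab k d (d - m) m, c • M ∈ Wab k d (d - m) m := by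
    intro c M hM i j h
    simp [Matrix.smul_apply, hM i j h]
  refine ⟨hsq, ⟨hone, ?_, ?_, ?_⟩, ?_, ?_⟩
  · -- closure under + and *, and commutativity
    rintro M ⟨c, N, hN, rfl⟩ M' ⟨c', N', hN', rfl⟩
    have hmul : (c • (1 : Matrix (Fin d) (Fin d) k) + N) * (c' • 1 + N') =
        (c * c') • (1 : Matrix (Fin d) (Fin d) k) + (c • N' + c' • N) := by
      have := hsq N hN N' hN'
      simp only [add_mul, mul_add, Matrix.smul_mul, Matrix.mul_smul, one_mul, mul_one,
        smul_smul, this]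
      rw [mul_comm c' c]
      abel
    have hmul' : (c' • (1 : Matrix (Fin d) (Fin d) k) + N') * (c • 1 + N) =
        (c' * c) • (1 : Matrix (Fin d) (Fin d) k) + (c' • N + c • N') := by
      have := hsq N' hN' N hN
      simp only [add_mul, mul_add, Matrix.smul_mul, Matrix.mul_smul, one_mul, mul_one,
        smul_smul, this]
      rw [mul_comm c c']
      abel
    refine ⟨⟨c + c', N + N', hWadd N hN N' hN', by module⟩,
      ⟨c * c', c • N' + c' • N, hWadd _ (hWsmul c N' hN') _ (hWsmul c' N hN), hmul⟩, ?_⟩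
    rw [hmul, hmul', mul_comm c c']
    abel
  · rintro c M ⟨c', N, hN, rfl⟩
    exact ⟨c * c', c • N, hWsmul c N hN, by module⟩
  · -- dimension
    classical
    set W' := LinearMap.range (blockMap k d m) with hW'
    have hWiff := fun M => mem_Wab_iff_mem_range (k := k) (d := d) (m := m) hmd M
    have hspan : Submodule.span k {M : Matrix (Fin d) (Fin d) k |
          ∃ c : k, ∃ N ∈ Wab k d (d - m) m, M = c • (1 : Matrix (Fin d) (Fin d) k) + N}
        = (k ∙ (1 : Matrix (Fin d) (Fin d) k)) ⊔ W' := by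
      apply le_antisymm
      · rw [Submodule.span_le]
        rintro M ⟨c, N, hN, rfl⟩
        exact Submodule.add_mem _
          (Submodule.mem_sup_left (Submodule.smul_mem _ c (Submodule.mem_span_singleton_self _)))
          (Submodule.mem_sup_right ((hWiff N).1 hN))
      · refine sup_le ?_ ?_
        · rw [Submodule.span_singleton_le_iff_mem]
          exact Submodule.subset_span hone
        · intro N hNW
          exact Submodule.subset_span ⟨0, N, (hWiff N).2 hNW, by simp⟩
    rw [hspan]
    have hinf : (k ∙ (1 : Matrix (Fin d) (Fin d) k)) ⊓ W' = ⊥ := by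
      rw [eq_bot_iff]
      intro x hx
      rw [Submodule.mem_inf] at hx
      obtain ⟨hx1, hx2⟩ := hx
      rw [Submodule.mem_span_singleton] at hx1
      obtain ⟨c, rfl⟩ := hx1
      have hxW := (hWiff _).2 hx2
      have h0 : d - m ≤ ((⟨d - 1, by omega⟩ : Fin d) : ℕ) := by simp; omega
      have hc := hxW ⟨d - 1, by omega⟩ ⟨d - 1, by omega⟩ (Or.inl h0)
      simp only [Matrix.smul_apply, Matrix.one_apply_eq, smul_eq_mul, mul_one] at hc
      simp [hc]
    have h1ne : (1 : Matrix (Fin d) (Fin d) k) ≠ 0 := by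
      intro h
      have := congrFun (congrFun h ⟨0, by omega⟩) ⟨0, by omega⟩
      simp at this
    have hkey := Submodule.finrank_sup_add_finrank_inf_eq
      (k ∙ (1 : Matrix (Fin d) (Fin d) k)) W'
    rw [hinf, finrank_bot, add_zero, finrank_span_singleton h1ne,
      LinearMap.finrank_range_of_inj (blockMap_inj hmd)] at hkey
    rw [hkey, Module.finrank_matrix]
    simp [Module.finrank_self, mul_comm]
    omega
  · -- m-spanning
    classical
    refine ⟨Submodule.span k {w : Fin d → k | ∃ i : Fin d, d - m ≤ (i : ℕ) ∧ w = Pi.single i 1},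
      ?_, ?_⟩
    · refine finrank_span_singles_le _ m ?_
      have hsub : (Finset.univ.filter fun i : Fin d => d - m ≤ (i : ℕ)) ⊆
          Finset.image (fun j : Fin m => (⟨d - m + (j : ℕ), by have := j.isLt; omega⟩ : Fin d))
            Finset.univ := by
        intro i hi
        simp only [Finset.mem_filter, Finset.mem_univ, true_and] at hi
        simp only [Finset.mem_image, Finset.mem_univ, true_and]
        exact ⟨⟨(i : ℕ) - (d - m), by have := i.isLt; omega⟩, Fin.ext (by simp; omega)⟩
      calc (Finset.univ.filter fun i : Fin d => d - m ≤ (i : ℕ)).card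
          ≤ _ := Finset.card_le_card hsub
        _ ≤ (Finset.univ : Finset (Fin m)).card := Finset.card_image_le
        _ = m := by simp
    · have hsingle : ∀ i : Fin d, (Pi.single i 1 : Fin d → k) ∈
          {w : Fin d → k | ∃ M ∈ {M | ∃ (c : k) (N : Matrix (Fin d) (Fin d) k),
            N ∈ Wab k d (d - m) m ∧ M = c • (1 : Matrix (Fin d) (Fin d) k) + N},
            ∃ u ∈ Submodule.span k
              {w : Fin d → k | ∃ i : Fin d, d - m ≤ (i : ℕ) ∧ w = Pi.single i 1},
            w = M.mulVec u} := by
        intro i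
        by_cases hi : d - m ≤ (i : ℕ)
        · exact ⟨1, hone, Pi.single i 1, Submodule.subset_span ⟨i, hi, rfl⟩,
            (Matrix.one_mulVec _).symm⟩
        · refine ⟨Matrix.single i ⟨d - m, by omega⟩ 1, ⟨0, Matrix.single i ⟨d - m, by omega⟩ 1, ?_, by simp⟩,
            Pi.single ⟨d - m, by omega⟩ 1, Submodule.subset_span ⟨⟨d - m, by omega⟩, le_refl _, rfl⟩,
            (stdBasis_mulVec i _).symm⟩
          intro i' j' h
          simp only [Matrix.single, Matrix.of_apply, ite_eq_right_iff, and_imp]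
          rintro rfl rfl
          rcases h with h | h
          · exact absurd h hi
          · exact absurd h (lt_irrefl (d - m))
      rw [eq_top_iff]
      intro v _
      rw [show v = _ from single_sum v]
      exact Submodule.sum_mem _ fun i _ =>
        Submodule.smul_mem _ _ (Submodule.subset_span (hsingle i))
  · -- not l-spanning
    classical
    rintro l hl1 hlm ⟨U, hU, hspan⟩
    set E := Submodule.span k {w : Fin d → k | ∃ i : Fin d, (i : ℕ) < d - m ∧ w = Pi.single i 1}
      with hE
    have hEr : Module.finrank k E ≤ d - m := by
      refine finrank_span_singles_le _ (d - m) ?_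
      have hsub : (Finset.univ.filter fun i : Fin d => (i : ℕ) < d - m) ⊆
          Finset.image (fun j : Fin (d - m) => (⟨(j : ℕ), by have := j.isLt; omega⟩ : Fin d))
            Finset.univ := by
        intro i hi
        simp only [Finset.mem_filter, Finset.mem_univ, true_and] at hi
        simp only [Finset.mem_image, Finset.mem_univ, true_and]
        exact ⟨⟨(i : ℕ), hi⟩, Fin.ext rfl⟩
      calc (Finset.univ.filter fun i : Fin d => (i : ℕ) < d - m).card
          ≤ _ := Finset.card_le_card hsub
        _ ≤ (Finset.univ : Finset (Fin (d - m))).card := Finset.card_image_le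
        _ = d - m := by simp
    have hle : Submodule.span k {w : Fin d → k | ∃ M ∈ {M | ∃ (c : k)
          (N : Matrix (Fin d) (Fin d) k), N ∈ Wab k d (d - m) m ∧
          M = c • (1 : Matrix (Fin d) (Fin d) k) + N}, ∃ u ∈ U, w = M.mulVec u} ≤ U ⊔ E := by
      rw [Submodule.span_le]
      rintro w ⟨M, ⟨c, N, hN, rfl⟩, u, hu, rfl⟩
      have heq : (c • (1 : Matrix (Fin d) (Fin d) k) + N).mulVec u = c • u + N.mulVec u := by
        rw [Matrix.add_mulVec, Matrix.smul_mulVec, Matrix.one_mulVec]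
      show _ ∈ U ⊔ E
      rw [heq]
      refine Submodule.add_mem _ (Submodule.mem_sup_left (U.smul_mem c hu))
        (Submodule.mem_sup_right ?_)
      refine mem_span_singles _ fun i hi => ?_
      simp only [Matrix.mulVec, dotProduct]
      refine Finset.sum_eq_zero fun l _ => ?_
      rw [show N i l = 0 from hN i l (Or.inl (by omega)), zero_mul]
    rw [hspan] at hle
    have h1 : d ≤ Module.finrank k ↥(U ⊔ E) := by
      have := Submodule.finrank_mono hle
      rwa [finrank_top, Module.finrank_fin_fun] at this
    have h2 := Submodule.finrank_sup_add_finrank_inf_eq U E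
    omega
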